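/- arXiv:2407.03973 — 5 statements merged into one kernel-verified Lean document; each statement's English description precedes it below -/
import Mathlib

section
/- Let a, b be positive integers. Then the tensor product of finite fields F_{2^a} ⊗_{F₂} F_{2^b} is isomorphic as an F₂-algebra to the product of gcd(a, b) copies of the finite field F_{2^{lcm(a,b)}}. -/
/-!
Put `m = lcm(a, b)` and `T = 𝔽_{p^a} ⊗ 𝔽_{p^b}`. Every pure tensor, hence (Frobenius being
additive) every element of `T`, satisfies `t ^ p ^ m = t`. So `T` is reduced, and being finite it is
the product of its residue fields `T/𝔪`. Each `T/𝔪` receives both `𝔽_{p^a}` and `𝔽_{p^b}`, so its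
degree is divisible by `m`, while `x ^ p ^ m = x` allows at most `p ^ m` elements: `T/𝔪 ≅ 𝔽_{p^m}`.
Comparing dimensions, `ab = #{𝔪} · m`, so there are `gcd(a, b)` factors.
-/

open scoped TensorProduct

theorem isReduced_of_forall_pow_eq_self {R : Type*} [MonoidWithZero R] {q : ℕ} (hq : 1 < q)
    (h : ∀ x : R, x ^ q = x) : IsReduced R := by
  have hiter (x : R) (k : ℕ) : x ^ q ^ k = x := by
    induction k with
    | zero => rw [pow_zero, pow_one]
    | succ k ih => rw [pow_succ, pow_mul, ih, h]
  refine ⟨fun x ⟨n, hn⟩ => ?_⟩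
  rw [← hiter x n]
  exact pow_eq_zero_of_le (Nat.lt_pow_self hq).le hn

theorem FiniteField.natCard_le_of_forall_pow_eq_self {K : Type*} [Field K] [Finite K] {q : ℕ}
    (hq : 1 < q) (h : ∀ x : K, x ^ q = x) : Nat.card K ≤ q := by
  have := Fintype.ofFinite K
  rw [Nat.card_eq_fintype_card]
  by_contra! hlt
  refine FiniteField.X_pow_card_sub_X_ne_zero K hq
    (Polynomial.eq_zero_of_natDegree_lt_card_of_eval_eq_zero _ Function.injective_id
      (fun x => by simp [h]) ?_)
  rwa [FiniteField.X_pow_card_sub_X_natDegree_eq K hq]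

theorem GaloisField.pow_pow_eq_self_of_dvd (p : ℕ) [Fact p.Prime] {n m : ℕ} (hn : n ≠ 0)
    (hnm : n ∣ m) (x : GaloisField p n) : x ^ p ^ m = x := by
  have := Fintype.ofFinite (GaloisField p n)
  obtain ⟨k, rfl⟩ := hnm
  rw [pow_mul, ← GaloisField.card p n hn, Nat.card_eq_fintype_card, FiniteField.pow_card_pow]

theorem Algebra.TensorProduct.pow_expChar_pow_eq_self {R A B : Type*} [CommSemiring R]
    [CommSemiring A] [CommSemiring B] [Algebra R A] [Algebra R B] {p m : ℕ}
    [ExpChar (A ⊗[R] B) p] (hA : ∀ x : A, x ^ p ^ m = x) (hB : ∀ y : B, y ^ p ^ m = y)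
    (t : A ⊗[R] B) : t ^ p ^ m = t := by
  induction t using TensorProduct.induction_on with
  | zero => exact zero_pow (pow_ne_zero _ (expChar_pos (A ⊗[R] B) p).ne')
  | tmul x y => rw [Algebra.TensorProduct.tmul_pow, hA, hB]
  | add u v hu hv => rw [add_pow_expChar_pow u v p m, hu, hv]

theorem FiniteField.finrank_eq_lcm_of_algHom {p : ℕ} [Fact p.Prime] {K : Type*} [Field K]
    [Finite K] [Algebra (ZMod p) K] {a b : ℕ} (ha : a ≠ 0) (hb : b ≠ 0)
    (fa : GaloisField p a →ₐ[ZMod p] K) (fb : GaloisField p b →ₐ[ZMod p] K)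
    (h : ∀ x : K, x ^ p ^ Nat.lcm a b = x) : Module.finrank (ZMod p) K = Nat.lcm a b := by
  have hp := (Fact.out : p.Prime).one_lt
  have hdvd : Nat.lcm a b ∣ Module.finrank (ZMod p) K := by
    refine Nat.lcm_dvd ?_ ?_
    · simpa [GaloisField.finrank p ha] using nonempty_algHom_iff_finrank_dvd.mp ⟨fa⟩
    · simpa [GaloisField.finrank p hb] using nonempty_algHom_iff_finrank_dvd.mp ⟨fb⟩
  refine le_antisymm ?_ (Nat.le_of_dvd Module.finrank_pos hdvd)
  have hcard := natCard_le_of_forall_pow_eq_self (Nat.one_lt_pow (Nat.lcm_ne_zero ha hb) hp) h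
  rw [← pow_finrank_eq_natCard p] at hcard
  exact (Nat.pow_le_pow_iff_right hp).mp hcard

theorem GaloisField.nonempty_tensorProduct_algEquiv_pi (p : ℕ) [Fact p.Prime] {a b : ℕ}
    (ha : a ≠ 0) (hb : b ≠ 0) :
    Nonempty ((GaloisField p a ⊗[ZMod p] GaloisField p b) ≃ₐ[ZMod p]
      (Fin (Nat.gcd a b) → GaloisField p (Nat.lcm a b))) := by
  set T := GaloisField p a ⊗[ZMod p] GaloisField p b
  set m := Nat.lcm a b
  have hm : m ≠ 0 := Nat.lcm_ne_zero ha hb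
  have : Finite T := Module.finite_of_finite (ZMod p)
  have : CharP T p := charP_of_injective_algebraMap' (ZMod p) p
  have hfix : ∀ t : T, t ^ p ^ m = t := Algebra.TensorProduct.pow_expChar_pow_eq_self
    (pow_pow_eq_self_of_dvd p ha (Nat.dvd_lcm_left a b))
    (pow_pow_eq_self_of_dvd p hb (Nat.dvd_lcm_right a b))
  have : IsReduced T :=
    isReduced_of_forall_pow_eq_self (Nat.one_lt_pow hm (Fact.out : p.Prime).one_lt) hfix
  have eQuot (I : MaximalSpectrum T) : (T ⧸ I.asIdeal) ≃ₐ[ZMod p] GaloisField p m := by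
    letI := Ideal.Quotient.field I.asIdeal
    have : Finite (T ⧸ I.asIdeal) := Quotient.finite _
    let π := Ideal.Quotient.mkₐ (ZMod p) I.asIdeal
    refine algEquivGaloisField p m ?_
    rw [← FiniteField.pow_finrank_eq_natCard p, FiniteField.finrank_eq_lcm_of_algHom ha hb
      (π.comp Algebra.TensorProduct.includeLeft) (π.comp Algebra.TensorProduct.includeRight)]
    intro x
    obtain ⟨t, rfl⟩ := Ideal.Quotient.mkₐ_surjective (ZMod p) I.asIdeal x
    rw [← map_pow, hfix]
  let e := ((IsArtinianRing.equivPi T).restrictScalars (ZMod p)).trans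
    (AlgEquiv.piCongrRight eQuot)
  have hcard : Nat.card (MaximalSpectrum T) = Nat.gcd a b := by
    have := Fintype.ofFinite (MaximalSpectrum T)
    have hdim := e.toLinearEquiv.finrank_eq
    rw [Module.finrank_tensorProduct, finrank p ha, finrank p hb, Module.finrank_pi_fintype,
      Finset.sum_const, finrank p hm, Finset.card_univ, smul_eq_mul] at hdim
    rw [Nat.card_eq_fintype_card]
    refine Nat.eq_of_mul_eq_mul_right (Nat.pos_of_ne_zero hm) ?_
    rw [← hdim]
    exact (Nat.gcd_mul_lcm a b).symm
  exact ⟨e.trans (AlgEquiv.piCongrLeft' (ZMod p) _ (Finite.equivFinOfCardEq hcard))⟩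

/-- `F_{2^a} ⊗_{F₂} F_{2^b}` is isomorphic as an `F₂`-algebra to the product of
`gcd(a, b)` copies of `F_{2^{lcm(a, b)}}`. -/
theorem stmt12 (a b : ℕ) (ha : 0 < a) (hb : 0 < b) :
    Nonempty ((GaloisField 2 a ⊗[ZMod 2] GaloisField 2 b) ≃ₐ[ZMod 2]
      (Fin (Nat.gcd a b) → GaloisField 2 (Nat.lcm a b))) :=
  GaloisField.nonempty_tensorProduct_algEquiv_pi 2 ha.ne' hb.ne'
end

section
/- Let ℓ, m, k, k' be positive integers with ℓ = k·k', let ζ(y) ∈ F₂[y], and in R = F₂[x, y]/(xˡ − 1, yᵐ − 1) let c = x^k + ζ(y). Define χ(y) = ζ(y)^{k'} + 1 ∈ F₂[y], let χ̄(y) = gcd(χ(y), yᵐ + 1) in F₂[y], let g(y) ∈ F₂[y] be the polynomial with g(y)·χ̄(y) = yᵐ + 1, and set P(x, y) = Σ_{i=0}^{k'−1} x^{ℓ−i·k}·ζ(y)^i·g(y). Then the annihilator ideal of c in R is the principal ideal generated by the image of P(x, y): ann_R(c) = (P). -/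
def annI (R : Type*) [CommRing R] (c : R) : Ideal R :=
  LinearMap.ker (LinearMap.lsmul R R c)

/-- The ring `F₂[x, y]/(xˡ − 1, yᵐ − 1)` underlying bivariate bicycle codes. -/
abbrev BBRing (l m : ℕ) : Type :=
  MvPolynomial (Fin 2) (ZMod 2) ⧸
    Ideal.span {(MvPolynomial.X 0 : MvPolynomial (Fin 2) (ZMod 2)) ^ l - 1,
      (MvPolynomial.X 1 : MvPolynomial (Fin 2) (ZMod 2)) ^ m - 1}

noncomputable abbrev BBIdeal (l m : ℕ) : Ideal (MvPolynomial (Fin 2) (ZMod 2)) :=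
  Ideal.span {(MvPolynomial.X 0 : MvPolynomial (Fin 2) (ZMod 2)) ^ l - 1,
    (MvPolynomial.X 1 : MvPolynomial (Fin 2) (ZMod 2)) ^ m - 1}

/-!
`R` is the group algebra `A[ℤ/ℓ]` of the cyclic group generated by `x` over
`A = F₂[y]/(yᵐ − 1)`, and in characteristic two `c = x^k − ζ`. If `c·f = 0`, the
coefficients of `f` satisfy `f_{j−k} = ζ·f_j`; going once around the cycle
(`k'` steps of `k`) shows that every coefficient is killed by `1 − ζ^{k'}`, hence is a
multiple of `g` by Bézout in `F₂[y]`. Writing each index as `r − i·k` with `r < k`,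
`i < k'` then exhibits `f` as `(∑_{r<k} t_r x^r)·P`. Conversely, the geometric sum
formula gives `c·P = x^k (1 − ζ^{k'}) g`, which vanishes because `yᵐ + 1` divides
`g·(ζ^{k'} + 1)`.
-/

open Polynomial Finset AddMonoidAlgebra

theorem mem_annI {R : Type*} [CommRing R] {c r : R} : r ∈ annI R c ↔ c * r = 0 :=
  Iff.rfl

theorem annI_map_ringEquiv {R S : Type*} [CommRing R] [CommRing S] (e : R ≃+* S) (c : R) :
    (annI R c).map e = annI S (e c) := by
  ext s
  rw [← Ideal.symm_apply_mem_of_equiv_iff, mem_annI, mem_annI,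
    ← map_eq_zero_iff e e.injective, map_mul, RingEquiv.apply_symm_apply]

theorem annI_eq_span_of_ringEquiv {R S : Type*} [CommRing R] [CommRing S] (e : R ≃+* S)
    {c p : R} (h : annI S (e c) = Ideal.span {e p}) : annI R c = Ideal.span {p} :=
  calc annI R c = ((annI R c).map e).map e.symm := (Ideal.map_of_equiv e).symm
    _ = Ideal.span {p} := by
      rw [annI_map_ringEquiv, h, Ideal.map_span, Set.image_singleton, e.symm_apply_apply]

theorem neg_eq_self_of_zmod_two {M : Type*} [AddCommGroup M] [Module (ZMod 2) M] (a : M) :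
    -a = a := by
  rw [neg_eq_iff_add_eq_zero, ← two_smul (ZMod 2) a]
  exact zero_smul _ a

theorem annI_quotient_mk_eq_span {E : Type*} [EuclideanDomain E] [DecidableEq E] {a χ g : E}
    (ha : a ≠ 0) (hg : g * EuclideanDomain.gcd χ a = a) :
    annI (E ⧸ Ideal.span {a}) (Ideal.Quotient.mk _ χ) = Ideal.span {Ideal.Quotient.mk _ g} := by
  set d := EuclideanDomain.gcd χ a
  have hd : d ≠ 0 := fun h => ha (EuclideanDomain.gcd_eq_zero_iff.1 h).2
  have mk_eq_zero {p : E} : Ideal.Quotient.mk (Ideal.span {a}) p = 0 ↔ a ∣ p := by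
    rw [Ideal.Quotient.eq_zero_iff_mem, Ideal.mem_span_singleton]
  apply le_antisymm
  · intro r hr
    obtain ⟨p, rfl⟩ := Ideal.Quotient.mk_surjective r
    obtain ⟨q, hq⟩ := mk_eq_zero.1 (by rwa [mem_annI, ← map_mul] at hr)
    -- Bézout: `d = χ s + a t`, so `a ∣ d p`; cancelling `d` in `a = g d` gives `g ∣ p`.
    obtain ⟨u, hu⟩ : a ∣ d * p := by
      rw [show d = _ from EuclideanDomain.gcd_eq_gcd_ab χ a, add_mul]
      exact dvd_add ⟨q * EuclideanDomain.gcdA χ a, by rw [mul_right_comm, hq, mul_assoc]⟩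
        (dvd_mul_of_dvd_left (dvd_mul_right _ _) _)
    have hp : p = g * u := mul_left_cancel₀ hd (by rw [hu, ← hg]; ring)
    exact Ideal.mem_span_singleton.2 (hp ▸ map_dvd _ (dvd_mul_right g u))
  · rw [Ideal.span_le, Set.singleton_subset_iff, SetLike.mem_coe, mem_annI, ← map_mul,
      mk_eq_zero, ← hg, mul_comm χ]
    exact mul_dvd_mul_left g (EuclideanDomain.gcd_dvd_left χ a)

theorem pow_sub_mul_sum_eq_of_pow_eq_one {R : Type*} [CommRing R] {x : R} {k k' : ℕ}
    (hx : x ^ (k * k') = 1) (w G : R) :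
    (x ^ k - w) * ∑ i ∈ range k', x ^ (k * k' - i * k) * (w ^ i * G) =
      x ^ k * (1 - w ^ k') * G := by
  have hsum : ∑ i ∈ range k', x ^ (k * k' - i * k) * (w ^ i * G) =
      x ^ k * (∑ i ∈ range k', w ^ i * (x ^ k) ^ (k' - 1 - i)) * G := by
    rw [mul_sum, sum_mul]
    refine sum_congr rfl fun i hi => ?_
    obtain ⟨j, rfl⟩ := Nat.exists_eq_add_of_lt (mem_range.1 hi)
    rw [show k * (i + j + 1) - i * k = k + k * j by
        rw [Nat.sub_eq_iff_eq_add (by nlinarith)]; ring,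
      show i + j + 1 - 1 - i = j by omega, pow_add, pow_mul]
    ring
  have hgeom := geom_sum₂_mul w (x ^ k) k'
  rw [← pow_mul, hx] at hgeom
  rw [hsum]
  linear_combination (-(x ^ k * G)) * hgeom

theorem ZMod.sum_eq_sum_range_sum_range_sub {M : Type*} [AddCommMonoid M] {k k' : ℕ}
    [NeZero (k * k')] (F : ZMod (k * k') → M) :
    ∑ j, F j = ∑ r ∈ range k, ∑ i ∈ range k', F (r - ((i * k : ℕ) : ZMod (k * k'))) := by
  have hk : 0 < k := Nat.pos_of_mul_pos_right (Nat.pos_of_ne_zero (NeZero.ne (k * k')))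
  set φ : ℕ × ℕ → ZMod (k * k') := fun q => q.1 - ((q.2 * k : ℕ) : ZMod (k * k'))
  have hinj : Set.InjOn φ ↑(range k ×ˢ range k') := by
    rintro ⟨r₁, i₁⟩ h₁ ⟨r₂, i₂⟩ h₂ h
    simp only [coe_product, coe_range, Set.mem_prod, Set.mem_Iio] at h₁ h₂
    have hcast : ((r₁ + i₂ * k : ℕ) : ZMod (k * k')) = ((r₂ + i₁ * k : ℕ) : ZMod (k * k')) := by
      simp only [φ] at h
      push_cast at h ⊢
      linear_combination h
    rw [ZMod.natCast_eq_natCast_iff', Nat.mod_eq_of_lt (by nlinarith),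
      Nat.mod_eq_of_lt (by nlinarith)] at hcast
    obtain rfl : r₁ = r₂ := by
      simpa [Nat.add_mul_mod_self_right, Nat.mod_eq_of_lt h₁.1, Nat.mod_eq_of_lt h₂.1]
        using congrArg (· % k) hcast
    obtain rfl : i₁ = i₂ := (Nat.eq_of_mul_eq_mul_right hk (by omega)).symm
    rfl
  have himage : (range k ×ˢ range k').image φ = univ :=
    eq_univ_of_card _ (by
      rw [card_image_of_injOn hinj, card_product, card_range, card_range, ZMod.card])
  rw [← sum_product', ← himage, sum_image hinj]

namespace AddMonoidAlgebra

variable {A : Type*} [CommRing A]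

theorem coeff_sub_nsmul_of_mul_eq_zero {G : Type*} [AddCommGroup G] {a : G} {w : A} {f : A[G]}
    (hf : (of' A G a - single 0 w) * f = 0) (i : ℕ) (j : G) :
    f.coeff (j - i • a) = w ^ i * f.coeff j := by
  have step (j : G) : f.coeff (j - a) = w * f.coeff j := by
    simpa [sub_mul, sub_eq_zero, neg_add_eq_sub] using congrArg (·.coeff j) hf
  induction i with
  | zero => simp
  | succ i ih => rw [succ_nsmul, ← sub_sub, step, ih, ← mul_assoc, ← pow_succ']

theorem annI_of'_pow_sub_algebraMap_eq_span {k k' : ℕ} [NeZero (k * k')] {w G : A}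
    (hG : annI A (1 - w ^ k') = Ideal.span {G}) :
    annI A[ZMod (k * k')] (of' A _ 1 ^ k - algebraMap A _ w) =
      Ideal.span {∑ i ∈ range k', of' A _ 1 ^ (k * k' - i * k) *
        (algebraMap A _ w ^ i * algebraMap A _ G)} := by
  apply le_antisymm
  · intro f hf
    have hcoeff (i : ℕ) (j : ZMod (k * k')) :
        f.coeff (j - ((i * k : ℕ) : ZMod (k * k'))) = w ^ i * f.coeff j := by
      rw [← coeff_sub_nsmul_of_mul_eq_zero (a := (k : ZMod (k * k'))) _ i j]
      · simp [nsmul_eq_mul]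
      · simpa [coe_algebraMap] using mem_annI.1 hf
    have hmul (j : ZMod (k * k')) : ∃ t, t * G = f.coeff j := by
      rw [← Ideal.mem_span_singleton', ← hG, mem_annI, sub_mul, one_mul, ← hcoeff k' j]
      simp [mul_comm k', sub_self]
    choose t ht using hmul
    refine Ideal.mem_span_singleton'.2 ⟨∑ r ∈ range k, single (r : ZMod (k * k')) (t r), ?_⟩
    calc (∑ r ∈ range k, single (r : ZMod (k * k')) (t r)) *
          ∑ i ∈ range k', of' A _ 1 ^ (k * k' - i * k) * (algebraMap A _ w ^ i * algebraMap A _ G)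
        = ∑ r ∈ range k, ∑ i ∈ range k', single (r - ((i * k : ℕ) : ZMod (k * k')))
            (f.coeff (r - ((i * k : ℕ) : ZMod (k * k')))) := by
          rw [sum_mul]
          refine sum_congr rfl fun r _ => ?_
          rw [mul_sum]
          refine sum_congr rfl fun i hi => ?_
          have hle : i * k ≤ k * k' := by nlinarith [mem_range.1 hi]
          rw [hcoeff, ← ht]
          simp [coe_algebraMap, Nat.cast_sub hle, sub_eq_add_neg]
          ring
      _ = ∑ j, single j (f.coeff j) :=
          (ZMod.sum_eq_sum_range_sum_range_sub fun j => single j (f.coeff j)).symm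
      _ = f := by rw [← Finsupp.sum_fintype _ _ fun _ => single_zero _, sum_coeff_single]
  · have hx : of' A (ZMod (k * k')) 1 ^ (k * k') = 1 := by simp [one_def]
    have hGann : (1 - w ^ k') * G = 0 := mem_annI.1 (hG ▸ Ideal.mem_span_singleton_self G)
    rw [Ideal.span_le, Set.singleton_subset_iff, SetLike.mem_coe, mem_annI,
      pow_sub_mul_sum_eq_of_pow_eq_one hx, mul_assoc, ← map_pow,
      ← map_one (algebraMap A A[ZMod (k * k')]), ← map_sub, ← map_mul, hGann, map_zero, mul_zero]

end AddMonoidAlgebra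

def zmodPowHom {M : Type*} [Monoid M] {n : ℕ} [NeZero n] (x : M) (hx : x ^ n = 1) :
    Multiplicative (ZMod n) →* M where
  toFun a := x ^ a.toAdd.val
  map_one' := by simp
  map_mul' a b := by rw [toAdd_mul, ZMod.val_add, ← pow_eq_pow_mod _ hx, pow_add]

section CyclicGroupAlgebra

variable (R : Type*) [CommRing R] (n m : ℕ)

local notation "Rxy" => MvPolynomial (Fin 2) R ⧸
  Ideal.span {(MvPolynomial.X 0 : MvPolynomial (Fin 2) R) ^ n - 1, MvPolynomial.X 1 ^ m - 1}

local notation "Ry" => AdjoinRoot ((X : R[X]) ^ m - 1)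

theorem AdjoinRoot.root_X_pow_sub_one_pow : AdjoinRoot.root ((X : R[X]) ^ m - 1) ^ m = 1 := by
  have h := AdjoinRoot.aeval_eq (f := (X : R[X]) ^ m - 1) (X ^ m - 1)
  rwa [AdjoinRoot.mk_self, map_sub, map_pow, aeval_X, map_one, sub_eq_zero] at h

theorem mk_X_zero_pow : (Ideal.Quotient.mk _ (MvPolynomial.X 0) : Rxy) ^ n = 1 := by
  rw [← map_pow, ← map_one (Ideal.Quotient.mk _), Ideal.Quotient.mk_eq_mk_iff_sub_mem]
  exact Ideal.subset_span (by simp)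

theorem mk_X_one_pow : (Ideal.Quotient.mk _ (MvPolynomial.X 1) : Rxy) ^ m = 1 := by
  rw [← map_pow, ← map_one (Ideal.Quotient.mk _), Ideal.Quotient.mk_eq_mk_iff_sub_mem]
  exact Ideal.subset_span (by simp)

noncomputable def toCyclicGroupAlgebra : Rxy →ₐ[R] Ry[ZMod n] :=
  Ideal.Quotient.liftₐ _
    (MvPolynomial.aeval ![of' Ry (ZMod n) 1, algebraMap Ry _ (AdjoinRoot.root _)])
    fun a ha => by
      refine (Ideal.span_le (I := RingHom.ker (MvPolynomial.aeval _))).2 ?_ ha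
      rintro _ (rfl | rfl) <;>
        simp only [SetLike.mem_coe, RingHom.mem_ker, map_sub, map_pow, map_one,
          MvPolynomial.aeval_X]
      · simp [single_pow, one_def]
      · simp [AdjoinRoot.root_X_pow_sub_one_pow, one_def]

@[simp]
theorem toCyclicGroupAlgebra_mk (p : MvPolynomial (Fin 2) R) :
    toCyclicGroupAlgebra R n m (Ideal.Quotient.mk _ p) =
      MvPolynomial.aeval ![of' Ry (ZMod n) 1, algebraMap Ry _ (AdjoinRoot.root _)] p :=
  rfl

variable [NeZero n]

noncomputable def ofCyclicGroupAlgebra : Ry[ZMod n] →ₐ[R] Rxy :=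
  liftNCAlgHom
    (AdjoinRoot.liftAlgHom _ (Algebra.ofId R _) (Ideal.Quotient.mk _ (MvPolynomial.X 1))
      (by simpa [sub_eq_zero] using mk_X_one_pow R n m))
    (zmodPowHom _ (mk_X_zero_pow R n m)) fun _ _ => Commute.all _ _

theorem toCyclicGroupAlgebra_comp_ofCyclicGroupAlgebra :
    (toCyclicGroupAlgebra R n m).comp (ofCyclicGroupAlgebra R n m) = AlgHom.id R Ry[ZMod n] := by
  set φψ := (toCyclicGroupAlgebra R n m).comp (ofCyclicGroupAlgebra R n m)
  have hA : φψ.comp (IsScalarTower.toAlgHom R Ry Ry[ZMod n]) = IsScalarTower.toAlgHom R Ry _ :=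
    AdjoinRoot.algHom_ext (by simp [φψ, ofCyclicGroupAlgebra, coe_algebraMap])
  refine AlgHom.coe_ringHom_injective (ringHom_ext (fun r => ?_) fun a => ?_)
  · simpa [coe_algebraMap] using AlgHom.congr_fun hA r
  · simp [φψ, ofCyclicGroupAlgebra, zmodPowHom]

theorem ofCyclicGroupAlgebra_comp_toCyclicGroupAlgebra :
    (ofCyclicGroupAlgebra R n m).comp (toCyclicGroupAlgebra R n m) = AlgHom.id R Rxy := by
  refine Ideal.Quotient.algHom_ext _ (MvPolynomial.algHom_ext fun i => ?_)
  fin_cases i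
  · simp [ofCyclicGroupAlgebra, zmodPowHom, ZMod.val_one_eq_one_mod,
      ← pow_eq_pow_mod _ (mk_X_zero_pow R n m)]
  · simp [ofCyclicGroupAlgebra, zmodPowHom]

noncomputable def cyclicGroupAlgebraEquiv : Rxy ≃ₐ[R] Ry[ZMod n] :=
  AlgEquiv.ofAlgHom _ _ (toCyclicGroupAlgebra_comp_ofCyclicGroupAlgebra R n m)
    (ofCyclicGroupAlgebra_comp_toCyclicGroupAlgebra R n m)

theorem cyclicGroupAlgebraEquiv_mk_X_zero :
    cyclicGroupAlgebraEquiv R n m (Ideal.Quotient.mk _ (MvPolynomial.X 0)) =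
      of' Ry (ZMod n) 1 := by
  simp [cyclicGroupAlgebraEquiv]

theorem cyclicGroupAlgebraEquiv_mk_aeval_X_one (p : R[X]) :
    cyclicGroupAlgebraEquiv R n m (Ideal.Quotient.mk _ (aeval (MvPolynomial.X 1) p)) =
      algebraMap Ry _ (AdjoinRoot.mk _ p) := by
  rw [cyclicGroupAlgebraEquiv, AlgEquiv.ofAlgHom_apply, toCyclicGroupAlgebra_mk,
    ← aeval_algHom_apply, MvPolynomial.aeval_X, Matrix.cons_val_one, Matrix.cons_val_fin_one,
    aeval_algebraMap_apply, AdjoinRoot.aeval_eq]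

end CyclicGroupAlgebra

/-- For a semiperiodic element `c = x^k + ζ(y)` (with `k·k' = ℓ`), setting
`χ(y) = ζ(y)^{k'} + 1`, `χ̄ = gcd(χ, yᵐ + 1)`, `g·χ̄ = yᵐ + 1` and
`P(x, y) = Σ_{i<k'} x^{ℓ−i·k}·ζ(y)^i·g(y)`, the annihilator of `c` in `R`
is the principal ideal generated by the image of `P`. -/
theorem stmt15 (l m k k' : ℕ) (hk : 0 < k) (hk' : 0 < k') (hm : 0 < m)
    (hkk : k * k' = l) (ζ g : Polynomial (ZMod 2))
    (hg : g * EuclideanDomain.gcd (ζ ^ k' + 1)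
        ((Polynomial.X : Polynomial (ZMod 2)) ^ m + 1) =
      (Polynomial.X : Polynomial (ZMod 2)) ^ m + 1) :
    annI (BBRing l m)
      (Ideal.Quotient.mk (BBIdeal l m)
        ((MvPolynomial.X 0 : MvPolynomial (Fin 2) (ZMod 2)) ^ k +
          Polynomial.aeval (MvPolynomial.X 1 : MvPolynomial (Fin 2) (ZMod 2)) ζ)) =
    Ideal.span {Ideal.Quotient.mk (BBIdeal l m)
      (∑ i ∈ Finset.range k',
        (MvPolynomial.X 0 : MvPolynomial (Fin 2) (ZMod 2)) ^ (l - i * k) *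
          Polynomial.aeval (MvPolynomial.X 1 : MvPolynomial (Fin 2) (ZMod 2))
            (ζ ^ i * g))} := by
  subst hkk
  have : NeZero (k * k') := ⟨by positivity⟩
  have hG : annI (AdjoinRoot ((X : (ZMod 2)[X]) ^ m - 1)) (1 - AdjoinRoot.mk _ ζ ^ k') =
      Ideal.span {AdjoinRoot.mk _ g} := by
    have hχ : 1 - AdjoinRoot.mk ((X : (ZMod 2)[X]) ^ m - 1) ζ ^ k' =
        AdjoinRoot.mk _ (ζ ^ k' + 1) := by
      rw [map_add, map_pow, map_one, add_comm, ← sub_neg_eq_add, neg_eq_self_of_zmod_two]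
    rw [hχ]
    exact annI_quotient_mk_eq_span (X_pow_sub_C_ne_zero hm 1) (by rwa [CharTwo.sub_eq_add])
  refine annI_eq_span_of_ringEquiv (cyclicGroupAlgebraEquiv (ZMod 2) (k * k') m).toRingEquiv ?_
  simp only [AlgEquiv.coe_ringEquiv, map_add, map_sum, map_mul, map_pow,
    cyclicGroupAlgebraEquiv_mk_X_zero, cyclicGroupAlgebraEquiv_mk_aeval_X_one]
  rw [← sub_neg_eq_add, neg_eq_self_of_zmod_two]
  exact annI_of'_pow_sub_algebraMap_eq_span hG
end

section
/- Let ℓ, m, k, k' be positive integers with ℓ = k·k', let ζ(y) ∈ F₂[y], and in R = F₂[x, y]/(xˡ − 1, yᵐ − 1) let c = x^k + ζ(y). Define χ(y) = ζ(y)^{k'} + 1 ∈ F₂[y] and let χ̄(y) = gcd(χ(y), yᵐ + 1) and g(y)·χ̄(y) = yᵐ + 1 in F₂[y]. Suppose w is a positive integer such that every nonzero element of the ideal (g(y)) in F₂[y]/(yᵐ − 1) has Hamming weight at least w. Then every nonzero element f ∈ ann_R(c) has Hamming weight at least k'·w. Moreover, every nonzero element of ann_R(c) of minimal Hamming weight has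 weight at most k'·m. -/
/-- The group algebra `F₂[Z/ℓ × Z/m] = F₂[x, y]/(xˡ − 1, yᵐ − 1)`.  Elements have a
unique representative `Σ a_{ij} x^i y^j` (a finitely supported function on the group). -/
abbrev GA (l m : ℕ) := MonoidAlgebra (ZMod 2) (Multiplicative (ZMod l × ZMod m))

/-- The cyclic group algebra `F₂[Z/m] = F₂[y]/(yᵐ − 1)`. -/
abbrev GAc (m : ℕ) := MonoidAlgebra (ZMod 2) (Multiplicative (ZMod m))

/-- The element `x ∈ F₂[x, y]/(xˡ − 1, yᵐ − 1)`. -/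
noncomputable def xg (l m : ℕ) : GA l m :=
  MonoidAlgebra.single (Multiplicative.ofAdd ((1 : ZMod l), (0 : ZMod m))) 1

/-- The element `y ∈ F₂[x, y]/(xˡ − 1, yᵐ − 1)`. -/
noncomputable def yg (l m : ℕ) : GA l m :=
  MonoidAlgebra.single (Multiplicative.ofAdd ((0 : ZMod l), (1 : ZMod m))) 1

/-- The element `y ∈ F₂[y]/(yᵐ − 1)`. -/
noncomputable def yc (m : ℕ) : GAc m :=
  MonoidAlgebra.single (Multiplicative.ofAdd (1 : ZMod m)) 1

/-- Hamming weight on `F₂[x, y]/(xˡ − 1, yᵐ − 1)`: the number of nonzero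
coefficients of the unique representative. -/
noncomputable def wtGA {l m : ℕ} (f : GA l m) : ℕ := f.coeff.support.card

/-- Hamming weight on `F₂[y]/(yᵐ − 1)`. -/
noncomputable def wtC {m : ℕ} (a : GAc m) : ℕ := a.coeff.support.card

/-- The semiperiodic element `c = x^k + ζ(y)`. -/
noncomputable def cSemi (l m k : ℕ) (z : Polynomial (ZMod 2)) : GA l m :=
  xg l m ^ k + Polynomial.aeval (yg l m) z

/-!
Write `S = F₂[y]/(yᵐ − 1)` and view `F₂[x, y]/(xˡ − 1, yᵐ − 1)` as `S[x]/(xˡ − 1)`, so that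
`f = Σ fᵢ xⁱ` with `fᵢ ∈ S` and the weight of `f` is the sum of the weights of the `fᵢ`.
Since `−1 = 1`, `c = x^k − ζ`, and `f · c = 0` says `f_{i−k} = fᵢ ζ` for all `i`; hence
`fᵢ = f_{i+jk} ζʲ` for all `j`. Taking `j = k'` gives `fᵢ χ = 0`, which puts `fᵢ` in the ideal
`(g)`; and a nonzero `fᵢ` makes the `k'` distinct components `f_{i+jk}`, `j < k'`, nonzero, each
of weight at least `w`.

Conversely `g · (x^{kk'} − ζ^{k'})/(x^k − ζ) = Σ_{j<k'} g ζ^{k'−1−j} x^{jk}` annihilates `c`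
because `x^{kk'} = 1` and `g χ = 0` in `S`. It is supported on `k'` powers of `x`, so its weight
is at most `k'm`, and its coefficient at `x^{(k'−1)k}` is `g`, which is nonzero in `S` as soon as
`ann(c) ≠ 0`.
-/

open MonoidAlgebra Finset Polynomial

namespace MonoidAlgebra

theorem sum_le_card_support_mul {S G : Type*} [Semiring S] [Fintype G]
    (f : MonoidAlgebra S G) (ν : S → ℕ) (hν0 : ν 0 = 0) {M : ℕ} (hνM : ∀ a, ν a ≤ M) :
    ∑ i, ν (f.coeff i) ≤ #f.coeff.support * M := by
  classical
  rw [← sum_subset (subset_univ _) fun i _ hi => by rw [Finsupp.notMem_support_iff.mp hi, hν0]]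
  exact sum_le_card_nsmul _ _ _ fun i _ => hνM _

section Binomial

variable {S G : Type*} [CommRing S] [CommGroup G] {g₀ : G} {s : S} {f : MonoidAlgebra S G}

theorem exists_coeff_ne_zero (hf : f ≠ 0) : ∃ i, f.coeff i ≠ 0 :=
  Finsupp.ne_iff.mp (mt coeff_eq_zero.mp hf)

theorem coeff_mul_single_sub_single (f : MonoidAlgebra S G) (g₀ : G) (s : S) (i : G) :
    (f * (single g₀ 1 - single 1 s)).coeff i = f.coeff (i * g₀⁻¹) - f.coeff i * s := by
  simp [mul_sub]

theorem coeff_eq_coeff_mul_pow_mul_pow (hf : f * (single g₀ 1 - single 1 s) = 0) (i : G)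
    (j : ℕ) : f.coeff i = f.coeff (i * g₀ ^ j) * s ^ j := by
  have step (i : G) : f.coeff (i * g₀⁻¹) = f.coeff i * s := by
    rw [← sub_eq_zero, ← coeff_mul_single_sub_single, hf]
    rfl
  induction j with
  | zero => simp
  | succ j ih =>
    rw [ih, pow_succ, pow_succ, mul_comm (s ^ j), ← mul_assoc, ← step, ← mul_assoc i,
      mul_inv_cancel_right]

theorem coeff_mul_pow_sub_one_eq_zero {n : ℕ} (hn : g₀ ^ n = 1)
    (hf : f * (single g₀ 1 - single 1 s) = 0) (i : G) : f.coeff i * (s ^ n - 1) = 0 := by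
  have hperiodic := coeff_eq_coeff_mul_pow_mul_pow hf i n
  rw [hn, mul_one] at hperiodic
  rw [mul_sub_one, ← hperiodic, sub_self]

theorem coeff_mul_pow_ne_zero (hf : f * (single g₀ 1 - single 1 s) = 0) {i : G}
    (hi : f.coeff i ≠ 0) (j : ℕ) : f.coeff (i * g₀ ^ j) ≠ 0 := fun h => by
  rw [coeff_eq_coeff_mul_pow_mul_pow hf i j, h, zero_mul] at hi
  exact hi rfl

theorem orderOf_mul_le_sum_coeff_of_mul_eq_zero [Fintype G] (ν : S → ℕ) {w : ℕ}
    (hf : f * (single g₀ 1 - single 1 s) = 0) (hf0 : f ≠ 0)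
    (hν : ∀ i, f.coeff i ≠ 0 → w ≤ ν (f.coeff i)) :
    orderOf g₀ * w ≤ ∑ i, ν (f.coeff i) := by
  classical
  obtain ⟨i, hi⟩ := exists_coeff_ne_zero hf0
  set orbit := (range (orderOf g₀)).image (fun j => i * g₀ ^ j)
  have horbit : #orbit = orderOf g₀ := by
    rw [card_image_of_injOn, card_range]
    intro a ha b hb hab
    exact pow_injOn_Iio_orderOf (by simpa using ha) (by simpa using hb) (mul_left_cancel hab)
  calc orderOf g₀ * w = #orbit • w := by rw [horbit, smul_eq_mul]
    _ ≤ ∑ p ∈ orbit, ν (f.coeff p) := card_nsmul_le_sum _ _ _ fun p hp => by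
        obtain ⟨j, -, rfl⟩ := mem_image.mp hp
        exact hν _ (coeff_mul_pow_ne_zero hf hi j)
    _ ≤ ∑ p, ν (f.coeff p) := sum_le_sum_of_subset (subset_univ _)

-- `t · (Xⁿ − sⁿ) / (X − s)` for `X = single g₀ 1`
noncomputable def geomCofactor (g₀ : G) (s t : S) (n : ℕ) : MonoidAlgebra S G :=
  ∑ j ∈ range n, single (g₀ ^ j) (t * s ^ (n - 1 - j))

theorem geomCofactor_mul_eq_zero {g₀ : G} {s t : S} {n : ℕ} (hn : g₀ ^ n = 1)
    (ht : t * (s ^ n - 1) = 0) :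
    geomCofactor g₀ s t n * (single g₀ 1 - single 1 s) = 0 := by
  have hfactor : geomCofactor g₀ s t n =
      single 1 t * ∑ j ∈ range n, single g₀ (1 : S) ^ j * single 1 s ^ (n - 1 - j) := by
    simp only [geomCofactor, mul_sum, single_pow, one_pow, single_mul_single, one_mul, mul_one]
  rw [hfactor, mul_assoc, geom_sum₂_mul, single_pow, single_pow, one_pow, one_pow, hn,
    ← one_def, mul_sub, mul_one, single_mul_single, one_mul, ← single_sub, ← neg_sub, ← mul_sub_one,
    ht, neg_zero, single_zero]

theorem coeff_geomCofactor_pow_pred [Finite G] (g₀ : G) (s t : S) :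
    (geomCofactor g₀ s t (orderOf g₀)).coeff (g₀ ^ (orderOf g₀ - 1)) = t := by
  classical
  have hpos := orderOf_pos g₀
  rw [geomCofactor, coeff_sum, Finsupp.finsetSum_apply, sum_eq_single (orderOf g₀ - 1)]
  · simp
  · intro j hj hne
    rw [coeff_single, Finsupp.single_eq_of_ne]
    exact fun h => hne (pow_injOn_Iio_orderOf (x := g₀) (mem_range.mp hj)
      (Set.mem_Iio.mpr (by omega)) h.symm)
  · exact fun h => absurd (mem_range.mpr (by omega)) h

theorem card_support_geomCofactor_le (g₀ : G) (s t : S) (n : ℕ) :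
    #(geomCofactor g₀ s t n).coeff.support ≤ n := by
  classical
  calc #(geomCofactor g₀ s t n).coeff.support ≤ #((range n).image (g₀ ^ ·)) := by
        rw [geomCofactor, coeff_sum]
        refine card_le_card (Finsupp.support_finsetSum.trans (biUnion_subset.mpr fun j hj => ?_))
        rw [coeff_single]
        exact Finsupp.support_single_subset.trans
          (singleton_subset_iff.mpr (mem_image_of_mem _ hj))
    _ ≤ n := card_image_le.trans (card_range n).le

theorem exists_ne_zero_mul_eq_zero_card_support_le [Finite G] {t : S} (ht0 : t ≠ 0)
    (ht : t * (s ^ orderOf g₀ - 1) = 0) :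
    ∃ T : MonoidAlgebra S G, T ≠ 0 ∧ T * (single g₀ 1 - single 1 s) = 0 ∧
      #T.coeff.support ≤ orderOf g₀ := by
  refine ⟨geomCofactor g₀ s t (orderOf g₀), fun h => ht0 ?_,
    geomCofactor_mul_eq_zero (pow_orderOf_eq_one g₀) ht, card_support_geomCofactor_le ..⟩
  rw [← coeff_geomCofactor_pow_pred g₀ s t, h]
  rfl

end Binomial

section Curry

variable {R A B : Type*} [CommSemiring R] [AddMonoid A] [AddMonoid B]

variable (R A B) in
noncomputable def curryMultiplicativeProd :
    MonoidAlgebra R (Multiplicative (A × B)) ≃ₐ[R]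
      MonoidAlgebra (MonoidAlgebra R (Multiplicative B)) (Multiplicative A) :=
  (domCongr R R (MulEquiv.prodMultiplicative A B)).trans (curryAlgEquiv R)

@[simp]
theorem curryMultiplicativeProd_single (a : A) (b : B) (r : R) :
    curryMultiplicativeProd R A B (single (.ofAdd (a, b)) r) =
      single (.ofAdd a) (single (.ofAdd b) r) := by
  simp [curryMultiplicativeProd]

theorem coeff_coeff_curryMultiplicativeProd (f : MonoidAlgebra R (Multiplicative (A × B)))
    (a : A) (b : B) :
    ((curryMultiplicativeProd R A B f).coeff (.ofAdd a)).coeff (.ofAdd b) =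
      f.coeff (.ofAdd (a, b)) := by
  simp [curryMultiplicativeProd, curryAlgEquiv, curryRingEquiv, curryAddEquiv]

theorem card_support_eq_sum_card_support_curryMultiplicativeProd [Fintype A]
    (f : MonoidAlgebra R (Multiplicative (A × B))) :
    #f.coeff.support = ∑ a, #((curryMultiplicativeProd R A B f).coeff a).coeff.support := by
  classical
  rw [card_eq_sum_card_fiberwise (f := fun p => Multiplicative.ofAdd p.toAdd.1)
    (t := univ) fun _ _ => mem_univ _]
  refine sum_congr rfl fun a _ => ?_
  obtain ⟨a, rfl⟩ : ∃ a' : A, Multiplicative.ofAdd a' = a := ⟨a.toAdd, rfl⟩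
  symm
  refine card_nbij' (fun b => .ofAdd (a, b.toAdd)) (fun p => .ofAdd p.toAdd.2) ?_ ?_ ?_ ?_
  · intro b hb
    simpa [← coeff_coeff_curryMultiplicativeProd] using hb
  · intro p hp
    obtain ⟨hp, rfl⟩ : f.coeff p ≠ 0 ∧ p.toAdd.1 = a := by simpa using hp
    simpa [coeff_coeff_curryMultiplicativeProd] using hp
  · exact fun _ _ => rfl
  · intro p hp
    obtain ⟨-, rfl⟩ : f.coeff p ≠ 0 ∧ p.toAdd.1 = a := by simpa using hp
    rfl

end Curry

end MonoidAlgebra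

theorem ZMod.addOrderOf_natCast_of_mul_eq {k k' l : ℕ} (hl : l ≠ 0) (hkk : k * k' = l) :
    addOrderOf (k : ZMod l) = k' := by
  have hk : k ≠ 0 := by rintro rfl; simp_all
  rw [ZMod.addOrderOf_coe k hl, ← hkk, Nat.gcd_mul_right_left,
    Nat.mul_div_cancel_left _ (Nat.pos_of_ne_zero hk)]

theorem EuclideanDomain.dvd_of_mul_gcd_eq {R : Type*} [EuclideanDomain R] [DecidableEq R]
    {χ g h α : R} (hh : h ≠ 0) (hg : g * gcd χ h = h) (hdvd : h ∣ χ * α) : g ∣ α := by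
  have hd : gcd χ h ≠ 0 := fun h0 => hh (by rw [← hg, h0, mul_zero])
  obtain ⟨q, hq⟩ : h ∣ α * gcd χ h := by
    rw [gcd_eq_gcd_ab χ h, mul_add, ← mul_assoc, mul_comm α χ, mul_left_comm]
    exact dvd_add (hdvd.mul_right _) (dvd_mul_right h _)
  exact ⟨q, mul_right_cancel₀ hd (by rw [hq, mul_right_comm g q, hg])⟩

section CyclicGroupAlgebra

variable {m : ℕ}

theorem yc_pow (n : ℕ) : yc m ^ n = single (.ofAdd (n : ZMod m)) 1 := by
  rw [yc, single_pow, one_pow, ← ofAdd_nsmul, nsmul_one]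

theorem aeval_yc_surjective (hm : 0 < m) : Function.Surjective (aeval (R := ZMod 2) (yc m)) := by
  have : NeZero m := ⟨hm.ne'⟩
  intro a
  induction a using MonoidAlgebra.induction_linear with
  | zero => exact ⟨0, map_zero _⟩
  | add a b ha hb =>
    obtain ⟨p, rfl⟩ := ha
    obtain ⟨q, rfl⟩ := hb
    exact ⟨p + q, map_add _ _ _⟩
  | single j c =>
    refine ⟨C c * X ^ j.toAdd.val, ?_⟩
    rw [map_mul, aeval_C, aeval_X_pow, yc_pow, ZMod.natCast_zmod_val, coe_algebraMap,
      Function.comp_apply, Algebra.algebraMap_self, RingHom.id_apply, single_mul_single, one_mul,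
      mul_one]
    rfl

theorem aeval_yc_X_pow_add_one : aeval (yc m) ((X : (ZMod 2)[X]) ^ m + 1) = 0 := by
  rw [map_add, map_one, aeval_X_pow, yc_pow, ZMod.natCast_self, ofAdd_zero, ← one_def,
    ZModModule.add_self]

theorem coeff_aeval_yc_natCast {r : (ZMod 2)[X]} (hr : r.natDegree < m) {n : ℕ} (hn : n < m) :
    (aeval (yc m) r).coeff (.ofAdd (n : ZMod m)) = r.coeff n := by
  rw [aeval_eq_sum_range' hr, MonoidAlgebra.coeff_sum, Finsupp.finsetSum_apply,
    sum_eq_single_of_mem n (mem_range.mpr hn)]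
  · simp [yc_pow]
  · intro i hi hin
    rw [yc_pow, MonoidAlgebra.coeff_smul, Finsupp.smul_apply, coeff_single,
      Finsupp.single_eq_of_ne, smul_zero]
    intro h
    have := (ZMod.natCast_eq_natCast_iff' n i m).mp (Multiplicative.ofAdd.injective h)
    rw [Nat.mod_eq_of_lt hn, Nat.mod_eq_of_lt (mem_range.mp hi)] at this
    exact hin this.symm

theorem X_pow_add_one_dvd_of_aeval_yc_eq_zero (hm : 0 < m) {p : (ZMod 2)[X]}
    (hp : aeval (yc m) p = 0) : (X : (ZMod 2)[X]) ^ m + 1 ∣ p := by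
  have hmonic : ((X : (ZMod 2)[X]) ^ m + 1).Monic := by
    simpa using monic_X_pow_add_C (1 : ZMod 2) hm.ne'
  have hdeg : ((X : (ZMod 2)[X]) ^ m + 1).natDegree = m := by
    simpa using natDegree_X_pow_add_C (n := m) (r := (1 : ZMod 2))
  set h := (X : (ZMod 2)[X]) ^ m + 1
  refine (modByMonic_eq_zero_iff_dvd hmonic).mp ?_
  have hr : (p %ₘ h).natDegree < m := hdeg ▸ natDegree_modByMonic_lt p hmonic fun h1 => by
    simp [h1] at hdeg
    omega
  have hr0 : aeval (yc m) (p %ₘ h) = 0 := by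
    rw [modByMonic_eq_sub_mul_div p h, map_sub, map_mul, hp, aeval_yc_X_pow_add_one,
      zero_mul, sub_zero]
  ext n
  rcases lt_or_ge n m with hn | hn
  · rw [← coeff_aeval_yc_natCast hr hn, hr0]
    rfl
  · exact coeff_eq_zero_of_natDegree_lt (hr.trans_le hn)

theorem mem_span_aeval_yc_of_mul_eq_zero (hm : 0 < m) {χ g : (ZMod 2)[X]}
    (hg : g * EuclideanDomain.gcd χ ((X : (ZMod 2)[X]) ^ m + 1) = X ^ m + 1) {a : GAc m}
    (ha : a * aeval (yc m) χ = 0) : a ∈ Ideal.span {aeval (yc m) g} := by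
  obtain ⟨α, rfl⟩ := aeval_yc_surjective hm a
  rw [← map_mul, mul_comm] at ha
  have hne : (X : (ZMod 2)[X]) ^ m + 1 ≠ 0 := by
    simpa using (monic_X_pow_add_C (1 : ZMod 2) hm.ne').ne_zero
  obtain ⟨β, rfl⟩ := EuclideanDomain.dvd_of_mul_gcd_eq hne hg
    (X_pow_add_one_dvd_of_aeval_yc_eq_zero hm ha)
  exact Ideal.mem_span_singleton.mpr ⟨aeval (yc m) β, map_mul _ _ _⟩

theorem aeval_yc_mul_eq_zero_of_mul_gcd_eq {χ g : (ZMod 2)[X]}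
    (hg : g * EuclideanDomain.gcd χ ((X : (ZMod 2)[X]) ^ m + 1) = X ^ m + 1) :
    aeval (yc m) g * aeval (yc m) χ = 0 := by
  obtain ⟨e, he⟩ := EuclideanDomain.gcd_dvd_left χ ((X : (ZMod 2)[X]) ^ m + 1)
  rw [← map_mul, he, ← mul_assoc, hg, map_mul, aeval_yc_X_pow_add_one, zero_mul]

theorem wtC_le (hm : 0 < m) (a : GAc m) : wtC a ≤ m := by
  have : NeZero m := ⟨hm.ne'⟩
  simpa [wtC] using card_le_univ a.coeff.support

end CyclicGroupAlgebra

section ProductGroupAlgebra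
variable {l m : ℕ}

theorem curryMultiplicativeProd_xg_pow (k : ℕ) :
    curryMultiplicativeProd (ZMod 2) (ZMod l) (ZMod m) (xg l m ^ k) =
      single (.ofAdd (k : ZMod l)) 1 := by
  rw [map_pow, xg, curryMultiplicativeProd_single, ofAdd_zero, ← one_def, single_pow, one_pow,
    ← ofAdd_nsmul, nsmul_one]

theorem curryMultiplicativeProd_aeval_yg (p : (ZMod 2)[X]) :
    curryMultiplicativeProd (ZMod 2) (ZMod l) (ZMod m) (aeval (yg l m) p) =
      single 1 (aeval (yc m) p) := by
  rw [← AlgEquiv.coe_toAlgHom, ← aeval_algHom_apply, AlgEquiv.coe_toAlgHom, yg,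
    curryMultiplicativeProd_single, ← yc, ofAdd_zero]
  exact aeval_algebraMap_apply (MonoidAlgebra (GAc m) (Multiplicative (ZMod l))) (yc m) p

theorem curryMultiplicativeProd_cSemi (k : ℕ) (ζ : (ZMod 2)[X]) :
    curryMultiplicativeProd (ZMod 2) (ZMod l) (ZMod m) (cSemi l m k ζ) =
      single (.ofAdd (k : ZMod l)) 1 - single 1 (aeval (yc m) ζ) := by
  rw [cSemi, map_add, curryMultiplicativeProd_xg_pow, curryMultiplicativeProd_aeval_yg,
    ZModModule.sub_eq_add]

theorem wtGA_eq_sum_wtC [NeZero l] (f : GA l m) :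
    wtGA f = ∑ i, wtC ((curryMultiplicativeProd (ZMod 2) (ZMod l) (ZMod m) f).coeff i) :=
  card_support_eq_sum_card_support_curryMultiplicativeProd f

end ProductGroupAlgebra

theorem stmt16_general (l m k k' : ℕ) (hl : 0 < l) (hm : 0 < m)
    (hkk : k * k' = l) (zeta g : Polynomial (ZMod 2))
    (hg : g * EuclideanDomain.gcd (zeta ^ k' + 1)
        ((Polynomial.X : Polynomial (ZMod 2)) ^ m + 1) =
      (Polynomial.X : Polynomial (ZMod 2)) ^ m + 1)
    (w : ℕ)
    (hwt : ∀ a ∈ Ideal.span {Polynomial.aeval (yc m) g}, a ≠ 0 → w ≤ wtC a) :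
    (∀ f : GA l m, f * cSemi l m k zeta = 0 → f ≠ 0 → k' * w ≤ wtGA f) ∧
    (∀ f : GA l m, f * cSemi l m k zeta = 0 → f ≠ 0 →
      (∀ f' : GA l m, f' * cSemi l m k zeta = 0 → f' ≠ 0 → wtGA f ≤ wtGA f') →
      wtGA f ≤ k' * m) := by
  have : NeZero l := ⟨hl.ne'⟩
  set Φ := curryMultiplicativeProd (ZMod 2) (ZMod l) (ZMod m)
  set g₀ : Multiplicative (ZMod l) := .ofAdd (k : ZMod l)
  set s := aeval (yc m) zeta
  have horder : orderOf g₀ = k' := by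
    rw [orderOf_ofAdd_eq_addOrderOf, ZMod.addOrderOf_natCast_of_mul_eq hl.ne' hkk]
  have hann (f : GA l m) : f * cSemi l m k zeta = 0 ↔ Φ f * (single g₀ 1 - single 1 s) = 0 := by
    rw [← curryMultiplicativeProd_cSemi, ← map_mul, map_eq_zero_iff _ Φ.injective]
  have hχ : aeval (yc m) (zeta ^ k' + 1) = s ^ orderOf g₀ - 1 := by
    rw [horder, ZModModule.sub_eq_add, map_add, map_pow, map_one]
  have hcoeff (f : GA l m) (hf : f * cSemi l m k zeta = 0) (i) :
      (Φ f).coeff i ∈ Ideal.span {aeval (yc m) g} :=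
    mem_span_aeval_yc_of_mul_eq_zero hm hg
      (hχ ▸ coeff_mul_pow_sub_one_eq_zero (pow_orderOf_eq_one g₀) ((hann f).mp hf) i)
  refine ⟨fun f hf hf0 => ?_, fun f hf hf0 hmin => ?_⟩
  · rw [wtGA_eq_sum_wtC, ← horder]
    exact orderOf_mul_le_sum_coeff_of_mul_eq_zero wtC ((hann f).mp hf)
      ((map_ne_zero_iff _ Φ.injective).mpr hf0) fun i hi => hwt _ (hcoeff f hf i) hi
  · obtain ⟨i, hi⟩ := exists_coeff_ne_zero ((map_ne_zero_iff _ Φ.injective).mpr hf0)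
    have hg0 : aeval (yc m) g ≠ 0 := fun h => hi (by simpa [h] using hcoeff f hf i)
    obtain ⟨T, hT0, hT, hsupp⟩ := exists_ne_zero_mul_eq_zero_card_support_le hg0
      (hχ ▸ aeval_yc_mul_eq_zero_of_mul_gcd_eq hg)
    calc wtGA f ≤ wtGA (Φ.symm T) :=
          hmin _ ((hann _).mpr (by rwa [Φ.apply_symm_apply])) (by simpa using hT0)
      _ = ∑ i, wtC (T.coeff i) := by rw [wtGA_eq_sum_wtC, Φ.apply_symm_apply]
      _ ≤ #T.coeff.support * m := sum_le_card_support_mul _ wtC rfl (wtC_le hm)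
      _ ≤ k' * m := Nat.mul_le_mul_right m (horder ▸ hsupp)

/-- For a semiperiodic `c = x^k + ζ(y)` (with `k·k' = ℓ`), with
`χ = ζ^{k'} + 1`, `χ̄ = gcd(χ, yᵐ + 1)` and `g·χ̄ = yᵐ + 1`: if every nonzero
element of the ideal `(g(y)) ⊆ F₂[y]/(yᵐ − 1)` has Hamming weight at least `w`,
then every nonzero `f ∈ ann(c)` has Hamming weight at least `k'·w`, and every
nonzero element of `ann(c)` of minimal Hamming weight has weight at most `k'·m`. -/
theorem stmt16 (l m k k' : ℕ) (hl : 0 < l) (hm : 0 < m) (hk : 0 < k) (hk' : 0 < k')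
    (hkk : k * k' = l) (zeta g : Polynomial (ZMod 2))
    (hg : g * EuclideanDomain.gcd (zeta ^ k' + 1)
        ((Polynomial.X : Polynomial (ZMod 2)) ^ m + 1) =
      (Polynomial.X : Polynomial (ZMod 2)) ^ m + 1)
    (w : ℕ) (hw : 0 < w)
    (hwt : ∀ a ∈ Ideal.span {Polynomial.aeval (yc m) g}, a ≠ 0 → w ≤ wtC a) :
    (∀ f : GA l m, f * cSemi l m k zeta = 0 → f ≠ 0 → k' * w ≤ wtGA f) ∧
    (∀ f : GA l m, f * cSemi l m k zeta = 0 → f ≠ 0 →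
      (∀ f' : GA l m, f' * cSemi l m k zeta = 0 → f' ≠ 0 → wtGA f ≤ wtGA f') →
      wtGA f ≤ k' * m) :=
  stmt16_general l m k k' hl hm hkk zeta g hg w hwt
end

section
/- In R = F₂[x, y]/(x⁷ − 1, y⁷ − 1), let c = x + y³ + y⁴ and d = y + x³ + x⁴. Then the ideal generated by c and d equals the ideal generated by x + y and x³ + x² + 1, and the quotient ring R/(c, d) is isomorphic to F₂[x]/(x³ + x² + 1), which is a field with 8 elements. -/
/-- `c = x + y³ + y⁴ ∈ F₂[x, y]/(x⁷ − 1, y⁷ − 1)`. -/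
noncomputable def c7 : BBRing 7 7 :=
  Ideal.Quotient.mk (BBIdeal 7 7)
    (MvPolynomial.X 0 + MvPolynomial.X 1 ^ 3 + MvPolynomial.X 1 ^ 4)

/-- `d = y + x³ + x⁴ ∈ F₂[x, y]/(x⁷ − 1, y⁷ − 1)`. -/
noncomputable def d7 : BBRing 7 7 :=
  Ideal.Quotient.mk (BBIdeal 7 7)
    (MvPolynomial.X 1 + MvPolynomial.X 0 ^ 3 + MvPolynomial.X 0 ^ 4)

/-- The ring `F₂[x]/(x³ + x² + 1)`. -/
abbrev F8Q : Type :=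
  Polynomial (ZMod 2) ⧸
    Ideal.span {(Polynomial.X : Polynomial (ZMod 2)) ^ 3 + Polynomial.X ^ 2 + 1}

namespace BB98Aux

noncomputable section

abbrev R2 : Type := MvPolynomial (Fin 2) (ZMod 2)

local notation "X0" => (MvPolynomial.X 0 : R2)
local notation "X1" => (MvPolynomial.X 1 : R2)

def cP : R2 := X0 + X1^3 + X1^4
def dP : R2 := X1 + X0^3 + X0^4
def aP : R2 := X0 + X1
def bP : R2 := X0^3 + X0^2 + 1
def g1P : R2 := X0^7 - 1
def g2P : R2 := X1^7 - 1

lemma two_R2 : (2 : R2) = 0 := by exact_mod_cast CharP.cast_eq_zero R2 2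

lemma two_P : (2 : Polynomial (ZMod 2)) = 0 := by
  exact_mod_cast CharP.cast_eq_zero (Polynomial (ZMod 2)) 2

def ubP : R2 := X0^6
def vbP : R2 := X0^6*X1^2 + X0^6*X1^3 + X0^9*X1 + X0^9*X1^2 + X0^10*X1 + X0^10*X1^2
  + X0^12 + X0^12*X1 + X0^14 + X0^14*X1 + X0^15 + X0^16 + X0^17 + X0^18
def rbP : R2 := 1 + X0^2 + X0^3 + X0^9 + X0^10 + X0^15
def uaP : R2 := 1 + X1^13 + X1^15 + X1^16 + X1^17 + X1^18 + X1^19 + X0*X1^10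
  + X0*X1^11 + X0*X1^13 + X0*X1^15 + X0^2*X1^7 + X0^2*X1^10 + X0^2*X1^11 + X0^3*X1^7
def vaP : R2 := X1^7
def saP : R2 := X1 + X1^3 + X1^4 + X1^10 + X1^11 + X1^16
def ucP : R2 := 1 + X1^2 + X1^3 + X0*X1 + X0*X1^2 + X0^2*X1

lemma hb : bP = ubP * cP + vbP * dP + rbP * g1P := by
  simp only [bP, ubP, vbP, rbP, cP, dP, g1P]
  linear_combination (1 + X0^2 + X0^3 - X0^6*X1^3 - X0^6*X1^4 - X0^7 - X0^9*X1^2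
    - X0^9*X1^3 - X0^10*X1^2 - X0^10*X1^3 - X0^12*X1 - X0^12*X1^2 - X0^13*X1
    - X0^13*X1^2 - X0^14*X1 - X0^14*X1^2 - X0^15*X1 - X0^16 - X0^16*X1 - X0^17
    - X0^17*X1 - X0^18 - X0^18*X1 - X0^19 - X0^20 - X0^21 - X0^22) * two_R2

lemma ha : aP = uaP * cP + vaP * dP + saP * g2P := by
  simp only [aP, uaP, vaP, saP, cP, dP, g2P]
  linear_combination (X1 - X1^8 - X1^17 - X1^18 - X1^19 - X1^20 - X1^21 - X1^22
    - X1^23 - X0*X1^13 - X0*X1^14 - X0*X1^15 - X0*X1^16 - X0*X1^17 - X0*X1^18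
    - X0*X1^19 - X0^2*X1^10 - X0^2*X1^11 - X0^2*X1^13 - X0^2*X1^14 - X0^2*X1^15
    - X0^3*X1^7 - X0^3*X1^10 - X0^3*X1^11 - X0^4*X1^7) * two_R2

lemma hc : cP = ucP * aP + X1 * bP := by
  simp only [cP, ucP, aP, bP]
  linear_combination (-X1 - X0*X1^2 - X0*X1^3 - X0^2*X1 - X0^2*X1^2 - X0^3*X1) * two_R2

lemma hd : dP = 1 * aP + X0 * bP := by
  simp only [dP, aP, bP]
  linear_combination (-X0) * two_R2

abbrev mkB : R2 →+* BBRing 7 7 := Ideal.Quotient.mk (BBIdeal 7 7)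

lemma hg1 : mkB g1P = 0 :=
  Ideal.Quotient.eq_zero_iff_mem.2 (Ideal.subset_span (by simp [g1P]))

lemma hg2 : mkB g2P = 0 :=
  Ideal.Quotient.eq_zero_iff_mem.2 (Ideal.subset_span (by simp [g2P]))

lemma c7_eq : c7 = mkB cP := rfl
lemma d7_eq : d7 = mkB dP := rfl

lemma c7_mem : c7 ∈ Ideal.span {mkB aP, mkB bP} :=
  Ideal.mem_span_pair.2 ⟨mkB ucP, mkB X1, by
    rw [← map_mul, ← map_mul, ← map_add, c7_eq]
    exact congrArg mkB hc.symm⟩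

lemma d7_mem : d7 ∈ Ideal.span {mkB aP, mkB bP} :=
  Ideal.mem_span_pair.2 ⟨1, mkB X0, by
    rw [← map_one mkB, ← map_mul, ← map_mul, ← map_add, d7_eq]
    exact congrArg mkB hd.symm⟩

lemma b_mem : mkB bP ∈ Ideal.span {c7, d7} :=
  Ideal.mem_span_pair.2 ⟨mkB ubP, mkB vbP, by
    rw [c7_eq, d7_eq, ← map_mul, ← map_mul, ← map_add]
    refine (Ideal.Quotient.eq.2 ?_).symm
    have h : bP - (ubP * cP + vbP * dP) = rbP * g1P := by rw [hb]; ring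
    rw [h]
    exact Ideal.mul_mem_left _ _ (Ideal.subset_span (by simp [g1P]))⟩

lemma a_mem : mkB aP ∈ Ideal.span {c7, d7} :=
  Ideal.mem_span_pair.2 ⟨mkB uaP, mkB vaP, by
    rw [c7_eq, d7_eq, ← map_mul, ← map_mul, ← map_add]
    refine (Ideal.Quotient.eq.2 ?_).symm
    have h : aP - (uaP * cP + vaP * dP) = saP * g2P := by rw [ha]; ring
    rw [h]
    exact Ideal.mul_mem_left _ _ (Ideal.subset_span (by simp [g2P]))⟩

lemma span_eq : Ideal.span {c7, d7} = Ideal.span {mkB aP, mkB bP} := by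
  apply le_antisymm
  · rw [Ideal.span_le]
    rintro z hz
    simp only [Set.mem_insert_iff, Set.mem_singleton_iff] at hz
    rcases hz with rfl | rfl
    · exact c7_mem
    · exact d7_mem
  · rw [Ideal.span_le]
    rintro z hz
    simp only [Set.mem_insert_iff, Set.mem_singleton_iff] at hz
    rcases hz with rfl | rfl
    · exact a_mem
    · exact b_mem

/-! ### The isomorphism -/

def KI : Ideal R2 := Ideal.span {g1P, g2P, cP, dP}

abbrev mkK : R2 →+* R2 ⧸ KI := Ideal.Quotient.mk KI

lemma b_mem_K : bP ∈ KI := by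
  rw [hb, KI]
  refine Ideal.add_mem _ (Ideal.add_mem _ ?_ ?_) ?_ <;>
    exact Ideal.mul_mem_left _ _ (Ideal.subset_span (by simp))

lemma a_mem_K : aP ∈ KI := by
  rw [ha, KI]
  refine Ideal.add_mem _ (Ideal.add_mem _ ?_ ?_) ?_ <;>
    exact Ideal.mul_mem_left _ _ (Ideal.subset_span (by simp))

def fP : Polynomial (ZMod 2) := Polynomial.X ^ 3 + Polynomial.X ^ 2 + 1

abbrev mkF : Polynomial (ZMod 2) →+* F8Q := Ideal.Quotient.mk (Ideal.span {fP})

def ev : R2 →+* Polynomial (ZMod 2) :=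
  (MvPolynomial.eval₂Hom (Polynomial.C) (fun _ => Polynomial.X))

lemma hdvd7 : fP ∣ (Polynomial.X ^ 7 - 1 : Polynomial (ZMod 2)) := by
  refine ⟨Polynomial.X ^ 4 + Polynomial.X ^ 3 + Polynomial.X ^ 2 + 1, ?_⟩
  simp only [fP]
  linear_combination (-(Polynomial.X ^ 6 + Polynomial.X ^ 5 + Polynomial.X ^ 4
    + Polynomial.X ^ 3 + Polynomial.X ^ 2 + 1) : Polynomial (ZMod 2)) * two_P

lemma hker : KI ≤ RingHom.ker (mkF.comp ev) := by
  rw [KI, Ideal.span_le]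
  rintro z hz
  simp only [Set.mem_insert_iff, Set.mem_singleton_iff] at hz
  rcases hz with rfl | rfl | rfl | rfl
  · have h : ev g1P = Polynomial.X ^ 7 - 1 := by simp [ev, g1P]
    show mkF (ev g1P) = 0
    rw [h]
    exact Ideal.Quotient.eq_zero_iff_mem.2 (Ideal.mem_span_singleton.2 hdvd7)
  · have h : ev g2P = Polynomial.X ^ 7 - 1 := by simp [ev, g2P]
    show mkF (ev g2P) = 0
    rw [h]
    exact Ideal.Quotient.eq_zero_iff_mem.2 (Ideal.mem_span_singleton.2 hdvd7)
  · have h : ev cP = Polynomial.X + Polynomial.X ^ 3 + Polynomial.X ^ 4 := by simp [ev, cP]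
    show mkF (ev cP) = 0
    rw [h]
    exact Ideal.Quotient.eq_zero_iff_mem.2 (Ideal.mem_span_singleton.2
      ⟨Polynomial.X, by rw [fP]; ring⟩)
  · have h : ev dP = Polynomial.X + Polynomial.X ^ 3 + Polynomial.X ^ 4 := by simp [ev, dP]
    show mkF (ev dP) = 0
    rw [h]
    exact Ideal.Quotient.eq_zero_iff_mem.2 (Ideal.mem_span_singleton.2
      ⟨Polynomial.X, by rw [fP]; ring⟩)

def φ : R2 ⧸ KI →+* F8Q :=
  Ideal.Quotient.lift KI (mkF.comp ev) (fun _ ha => hker ha)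

def evy : Polynomial (ZMod 2) →+* R2 :=
  Polynomial.eval₂RingHom (MvPolynomial.C : ZMod 2 →+* R2) X0

lemma hkerψ : ∀ p ∈ Ideal.span {fP}, (mkK.comp evy) p = 0 := by
  intro p hp
  refine ?_
  have : Ideal.span {fP} ≤ RingHom.ker (mkK.comp evy) := by
    rw [Ideal.span_le]
    rintro z hz
    simp only [Set.mem_singleton_iff] at hz
    subst hz
    rw [SetLike.mem_coe, RingHom.mem_ker]
    have h1 : evy fP = bP := by simp [evy, fP, bP]
    show mkK (evy fP) = 0
    rw [h1]
    exact Ideal.Quotient.eq_zero_iff_mem.2 b_mem_K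
  exact this hp

def ψ : F8Q →+* R2 ⧸ KI :=
  Ideal.Quotient.lift (Ideal.span {fP}) (mkK.comp evy) hkerψ

lemma phi_mk (p : R2) : φ (mkK p) = mkF (ev p) := rfl
lemma psi_mk (p : Polynomial (ZMod 2)) : ψ (mkF p) = mkK (evy p) := rfl

lemma hφψ : φ.comp ψ = RingHom.id F8Q := by
  apply Ideal.Quotient.ringHom_ext
  apply Polynomial.ringHom_ext'
  · exact RingHom.ext_zmod _ _
  · show φ (ψ (mkF Polynomial.X)) = mkF Polynomial.X
    have h1 : evy Polynomial.X = X0 := by simp [evy]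
    have h2 : ev X0 = Polynomial.X := by simp [ev]
    rw [psi_mk, h1, phi_mk, h2]

lemma mk01 : mkK X0 = mkK X1 := by
  refine Ideal.Quotient.eq.2 ?_
  have h : (X0 : R2) - X1 = aP - X1 * 2 := by rw [aP]; ring
  rw [h, two_R2, mul_zero, sub_zero]
  exact a_mem_K

lemma hψφ : ψ.comp φ = RingHom.id (R2 ⧸ KI) := by
  apply Ideal.Quotient.ringHom_ext
  apply MvPolynomial.ringHom_ext
  · intro r
    exact RingHom.congr_fun
      (RingHom.ext_zmod (((ψ.comp φ).comp mkK).comp (MvPolynomial.C : ZMod 2 →+* R2))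
        (((RingHom.id (R2 ⧸ KI)).comp mkK).comp (MvPolynomial.C : ZMod 2 →+* R2))) r
  · intro i
    show ψ (φ (mkK (MvPolynomial.X i))) = mkK (MvPolynomial.X i)
    have h1 : ev (MvPolynomial.X i) = Polynomial.X := by simp [ev]
    have h2 : evy Polynomial.X = X0 := by simp [evy]
    rw [phi_mk, h1, psi_mk, h2]
    fin_cases i
    · rfl
    · exact mk01

def e3 : (R2 ⧸ KI) ≃+* F8Q := RingEquiv.ofRingHom φ ψ hφψ hψφ

lemma map_span_eq :
    Ideal.span {c7, d7} = Ideal.map mkB (Ideal.span {cP, dP}) := by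
  rw [Ideal.map_span, Set.image_insert_eq, Set.image_singleton]
  rfl

lemma sup_eq : BBIdeal 7 7 ⊔ Ideal.span {cP, dP} = KI := by
  rw [KI, ← Ideal.span_union, Set.insert_union, Set.singleton_union]
  rfl

def theIso : (BBRing 7 7 ⧸ Ideal.span {c7, d7}) ≃+* F8Q :=
  ((Ideal.quotEquivOfEq map_span_eq).trans
    (DoubleQuot.quotQuotEquivQuotSup (BBIdeal 7 7) (Ideal.span {cP, dP}))).trans
    ((Ideal.quotEquivOfEq sup_eq).trans e3)

/-! ### Field and cardinality -/

lemma fP_natDegree : fP.natDegree = 3 := by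
  rw [fP]; compute_degree!

lemma fP_irr : Irreducible fP := by
  rw [Polynomial.irreducible_iff_roots_eq_zero_of_degree_le_three
    (by rw [fP_natDegree]; norm_num) (le_of_eq fP_natDegree)]
  rw [Multiset.eq_zero_iff_forall_notMem]
  intro a ha
  rw [Polynomial.mem_roots'] at ha
  obtain ⟨-, hr⟩ := ha
  rw [Polynomial.IsRoot, fP] at hr
  simp only [Polynomial.eval_add, Polynomial.eval_pow, Polynomial.eval_X,
    Polynomial.eval_one] at hr
  have : ∀ a : ZMod 2, a ^ 3 + a ^ 2 + 1 ≠ 0 := by decide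
  exact this a hr

lemma fP_ne_zero : fP ≠ 0 := fP_irr.ne_zero

instance fP_max : (Ideal.span {fP}).IsMaximal :=
  PrincipalIdealRing.isMaximal_of_irreducible fP_irr

lemma isField_F8Q : IsField F8Q := by
  letI : Field F8Q := Ideal.Quotient.field (Ideal.span {fP})
  exact Field.toIsField F8Q

lemma card_F8Q : Nat.card F8Q = 8 := by
  have hdim : (AdjoinRoot.powerBasis fP_ne_zero).dim = 3 := by
    simp [AdjoinRoot.powerBasis, fP_natDegree]
  have h : Nat.card (AdjoinRoot fP) = 8 := by
    rw [Nat.card_congr (AdjoinRoot.powerBasis fP_ne_zero).basis.equivFun.toEquiv]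
    rw [Nat.card_eq_fintype_card, Fintype.card_fun]
    rw [ZMod.card, Fintype.card_fin, hdim]
    norm_num
  exact h

end

end BB98Aux

/-- In `R = F₂[x, y]/(x⁷ − 1, y⁷ − 1)` with `c = x + y³ + y⁴`, `d = y + x³ + x⁴`,
the ideal `(c, d)` equals the ideal `(x + y, x³ + x² + 1)`, and
`R/(c, d) ≅ F₂[x]/(x³ + x² + 1)`, a field with 8 elements. -/
theorem stmt18 :
    Ideal.span {c7, d7} =
      Ideal.span {Ideal.Quotient.mk (BBIdeal 7 7) (MvPolynomial.X 0 + MvPolynomial.X 1),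
        Ideal.Quotient.mk (BBIdeal 7 7) (MvPolynomial.X 0 ^ 3 + MvPolynomial.X 0 ^ 2 + 1)} ∧
    Nonempty ((BBRing 7 7 ⧸ Ideal.span {c7, d7}) ≃+* F8Q) ∧
    IsField F8Q ∧ Nat.card F8Q = 8 := by
  exact ⟨BB98Aux.span_eq, ⟨BB98Aux.theIso⟩, BB98Aux.isField_F8Q, BB98Aux.card_F8Q⟩
end

section
/- In R = F₂[x, y]/(x⁹ − 1, y⁹ − 1), let c = x³ + y + y² and d = y³ + x + x². Then: (1) the annihilator ideal of c in R is the principal ideal generated by P(x, y) = (1 + x³ + x⁶)·(y + y²)·(1 + y³ + y⁶); and (2) the ideal generated by c and d equals the ideal generated by x² + x + 1 and y² + y + 1. -/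
/-- `c = x³ + y + y² ∈ F₂[x, y]/(x⁹ − 1, y⁹ − 1)`. -/
noncomputable def c9 : BBRing 9 9 :=
  Ideal.Quotient.mk (BBIdeal 9 9)
    (MvPolynomial.X 0 ^ 3 + MvPolynomial.X 1 + MvPolynomial.X 1 ^ 2)

/-- `d = y³ + x + x² ∈ F₂[x, y]/(x⁹ − 1, y⁹ − 1)`. -/
noncomputable def d9 : BBRing 9 9 :=
  Ideal.Quotient.mk (BBIdeal 9 9)
    (MvPolynomial.X 1 ^ 3 + MvPolynomial.X 0 + MvPolynomial.X 0 ^ 2)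

/-- `P = (1 + x³ + x⁶)·(y + y²)·(1 + y³ + y⁶) ∈ F₂[x, y]/(x⁹ − 1, y⁹ − 1)`. -/
noncomputable def P9 : BBRing 9 9 :=
  Ideal.Quotient.mk (BBIdeal 9 9)
    ((1 + MvPolynomial.X 0 ^ 3 + MvPolynomial.X 0 ^ 6) *
      (MvPolynomial.X 1 + MvPolynomial.X 1 ^ 2) *
      (1 + MvPolynomial.X 1 ^ 3 + MvPolynomial.X 1 ^ 6))

open MvPolynomial in
private lemma two_mvp_eq_zero : (2 : MvPolynomial (Fin 2) (ZMod 2)) = 0 := by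
  rw [← map_ofNat (C : ZMod 2 →+* MvPolynomial (Fin 2) (ZMod 2)) 2,
    show (OfNat.ofNat 2 : ZMod 2) = 0 from rfl, map_zero]

open MvPolynomial in
private lemma mkeq99 {p q : MvPolynomial (Fin 2) (ZMod 2)} (u v : MvPolynomial (Fin 2) (ZMod 2))
    (h : p - q = u * (X 0 ^ 9 - 1) + v * (X 1 ^ 9 - 1)) :
    Ideal.Quotient.mk (BBIdeal 9 9) p = Ideal.Quotient.mk (BBIdeal 9 9) q := by
  rw [Ideal.Quotient.eq]
  exact Ideal.mem_span_pair.mpr ⟨u, v, h.symm⟩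

set_option maxHeartbeats 2000000
set_option synthInstance.maxHeartbeats 1000000

/-- In `R = F₂[x, y]/(x⁹ − 1, y⁹ − 1)` with `c = x³ + y + y²`, `d = y³ + x + x²`:
(1) `ann_R(c) = (P)` with `P = (1 + x³ + x⁶)(y + y²)(1 + y³ + y⁶)`; and
(2) `(c, d) = (x² + x + 1, y² + y + 1)`. -/
theorem stmt19 :
    annI (BBRing 9 9) c9 = Ideal.span {P9} ∧
    Ideal.span {c9, d9} =
      Ideal.span {Ideal.Quotient.mk (BBIdeal 9 9)
          (MvPolynomial.X 0 ^ 2 + MvPolynomial.X 0 + 1),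
        Ideal.Quotient.mk (BBIdeal 9 9)
          (MvPolynomial.X 1 ^ 2 + MvPolynomial.X 1 + 1)}  := by
  classical
  open MvPolynomial in
  have hPc : P9 * c9 = 0 := by
    rw [P9, c9, ← map_mul, show (Ideal.Quotient.mk (BBIdeal 9 9))
        ((1 + X 0 ^ 3 + X 0 ^ 6) * (X 1 + X 1 ^ 2) * (1 + X 1 ^ 3 + X 1 ^ 6) *
          (X 0 ^ 3 + X 1 + X 1 ^ 2)) = (Ideal.Quotient.mk (BBIdeal 9 9)) 0 from ?_, map_zero]
    refine (mkeq99 (X 1 + X 1 ^ 2 + X 1 ^ 4 + X 1 ^ 5 + X 1 ^ 7 + X 1 ^ 8) (X 1 + X 0 ^ 3 * X 1 + X 0 ^ 6 * X 1) ?_)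
    linear_combination ((X 1 + X 1 ^ 2 + X 1 ^ 3 + X 1 ^ 4 + X 1 ^ 5 + X 1 ^ 6 + X 1 ^ 7 + X 1 ^ 8 + X 1 ^ 9 + X 0 ^ 3 * X 1 + X 0 ^ 3 * X 1 ^ 2 + X 0 ^ 3 * X 1 ^ 3 + X 0 ^ 3 * X 1 ^ 4 + X 0 ^ 3 * X 1 ^ 5 + X 0 ^ 3 * X 1 ^ 6 + X 0 ^ 3 * X 1 ^ 7 + X 0 ^ 3 * X 1 ^ 8 + X 0 ^ 3 * X 1 ^ 9 + X 0 ^ 6 * X 1 + X 0 ^ 6 * X 1 ^ 2 + X 0 ^ 6 * X 1 ^ 3 + X 0 ^ 6 * X 1 ^ 4 + X 0 ^ 6 * X 1 ^ 5 + X 0 ^ 6 * X 1 ^ 6 + X 0 ^ 6 * X 1 ^ 7 + X 0 ^ 6 * X 1 ^ 8 + X 0 ^ 6 * X 1 ^ 9)) * two_mvp_eq_zero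
  open MvPolynomial in
  have hE : (Ideal.Quotient.mk (BBIdeal 9 9)) ((1 : MvPolynomial (Fin 2) (ZMod 2)) + X 1 + X 1 ^ 2 + X 1 ^ 4 + X 1 ^ 5 + X 1 ^ 7 + X 1 ^ 8 + X 0 ^ 3 * X 1 + X 0 ^ 3 * X 1 ^ 2 + X 0 ^ 3 * X 1 ^ 4 + X 0 ^ 3 * X 1 ^ 5 + X 0 ^ 3 * X 1 ^ 7 + X 0 ^ 3 * X 1 ^ 8 + X 0 ^ 6 * X 1 + X 0 ^ 6 * X 1 ^ 2 + X 0 ^ 6 * X 1 ^ 4 + X 0 ^ 6 * X 1 ^ 5 + X 0 ^ 6 * X 1 ^ 7 + X 0 ^ 6 * X 1 ^ 8) = (Ideal.Quotient.mk (BBIdeal 9 9)) (X 1 ^ 7 + X 1 ^ 8 + X 0 ^ 3 + X 0 ^ 3 * X 1 ^ 3 + X 0 ^ 6 + X 0 ^ 6 * X 1 ^ 2 + X 0 ^ 6 * X 1 ^ 4 + X 0 ^ 6 * X 1 ^ 5 + X 0 ^ 6 * X 1 ^ 7) * c9 := by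
    rw [c9, ← map_mul]
    refine (mkeq99 ((1 : MvPolynomial (Fin 2) (ZMod 2)) + X 1 ^ 2 + X 1 ^ 4 + X 1 ^ 5 + X 1 ^ 7) (X 1 + X 0 ^ 6) ?_)
    linear_combination (((1 : MvPolynomial (Fin 2) (ZMod 2)) + X 1 + X 1 ^ 2 + X 1 ^ 4 + X 1 ^ 5 + X 1 ^ 7 + (-1) * X 1 ^ 9 + (-1) * X 1 ^ 10 + (-1) * X 0 ^ 6 * X 1 ^ 3 + (-1) * X 0 ^ 6 * X 1 ^ 6 + (-1) * X 0 ^ 6 * X 1 ^ 9 + (-1) * X 0 ^ 9 + (-1) * X 0 ^ 9 * X 1 ^ 2 + (-1) * X 0 ^ 9 * X 1 ^ 4 + (-1) * X 0 ^ 9 * X 1 ^ 5 + (-1) * X 0 ^ 9 * X 1 ^ 7)) * two_mvp_eq_zero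
  open MvPolynomial in
  have hT : 1 - (Ideal.Quotient.mk (BBIdeal 9 9)) ((1 : MvPolynomial (Fin 2) (ZMod 2)) + X 1 + X 1 ^ 2 + X 1 ^ 4 + X 1 ^ 5 + X 1 ^ 7 + X 1 ^ 8 + X 0 ^ 3 * X 1 + X 0 ^ 3 * X 1 ^ 2 + X 0 ^ 3 * X 1 ^ 4 + X 0 ^ 3 * X 1 ^ 5 + X 0 ^ 3 * X 1 ^ 7 + X 0 ^ 3 * X 1 ^ 8 + X 0 ^ 6 * X 1 + X 0 ^ 6 * X 1 ^ 2 + X 0 ^ 6 * X 1 ^ 4 + X 0 ^ 6 * X 1 ^ 5 + X 0 ^ 6 * X 1 ^ 7 + X 0 ^ 6 * X 1 ^ 8) = P9 * (Ideal.Quotient.mk (BBIdeal 9 9)) ((1 : MvPolynomial (Fin 2) (ZMod 2))) := by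
    rw [P9, ← map_mul, ← map_one (Ideal.Quotient.mk (BBIdeal 9 9)), ← map_sub]
    refine (mkeq99 (0 : MvPolynomial (Fin 2) (ZMod 2)) (0 : MvPolynomial (Fin 2) (ZMod 2)) ?_)
    linear_combination (((-1) * X 1 + (-1) * X 1 ^ 2 + (-1) * X 1 ^ 4 + (-1) * X 1 ^ 5 + (-1) * X 1 ^ 7 + (-1) * X 1 ^ 8 + (-1) * X 0 ^ 3 * X 1 + (-1) * X 0 ^ 3 * X 1 ^ 2 + (-1) * X 0 ^ 3 * X 1 ^ 4 + (-1) * X 0 ^ 3 * X 1 ^ 5 + (-1) * X 0 ^ 3 * X 1 ^ 7 + (-1) * X 0 ^ 3 * X 1 ^ 8 + (-1) * X 0 ^ 6 * X 1 + (-1) * X 0 ^ 6 * X 1 ^ 2 + (-1) * X 0 ^ 6 * X 1 ^ 4 + (-1) * X 0 ^ 6 * X 1 ^ 5 + (-1) * X 0 ^ 6 * X 1 ^ 7 + (-1) * X 0 ^ 6 * X 1 ^ 8)) * two_mvp_eq_zero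
  constructor
  · apply le_antisymm
    · intro r hr
      have hcr : c9 * r = 0 := by
        simpa [annI, LinearMap.mem_ker, smul_eq_mul] using hr
      rw [Ideal.mem_span_singleton]
      open MvPolynomial in
      exact ⟨(Ideal.Quotient.mk (BBIdeal 9 9)) ((1 : MvPolynomial (Fin 2) (ZMod 2))) * r,
        by linear_combination r * hT + r * hE + ((Ideal.Quotient.mk (BBIdeal 9 9)) (X 1 ^ 7 + X 1 ^ 8 + X 0 ^ 3 + X 0 ^ 3 * X 1 ^ 3 + X 0 ^ 6 + X 0 ^ 6 * X 1 ^ 2 + X 0 ^ 6 * X 1 ^ 4 + X 0 ^ 6 * X 1 ^ 5 + X 0 ^ 6 * X 1 ^ 7)) * hcr⟩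
    · rw [Ideal.span_le, Set.singleton_subset_iff]
      have h : c9 * P9 = 0 := by linear_combination hPc
      simpa [annI, LinearMap.mem_ker, smul_eq_mul] using h
  · open MvPolynomial in
    refine le_antisymm (Ideal.span_le.mpr ?_) (Ideal.span_le.mpr ?_) <;>
      rintro z hz <;>
      simp only [Set.mem_insert_iff, Set.mem_singleton_iff] at hz <;>
      rcases hz with rfl | rfl <;> rw [SetLike.mem_coe, Ideal.mem_span_pair]
    · refine ⟨(Ideal.Quotient.mk (BBIdeal 9 9)) (X 0 + 1), 1, ?_⟩
      rw [c9, one_mul, ← map_mul, ← map_add]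
      refine (mkeq99 (0 : MvPolynomial (Fin 2) (ZMod 2)) (0 : MvPolynomial (Fin 2) (ZMod 2)) ?_).symm
      linear_combination (((-1 : MvPolynomial (Fin 2) (ZMod 2)) + (-1) * X 0 + (-1) * X 0 ^ 2)) * two_mvp_eq_zero
    · refine ⟨1, (Ideal.Quotient.mk (BBIdeal 9 9)) (X 1 + 1), ?_⟩
      rw [d9, one_mul, ← map_mul, ← map_add]
      refine (mkeq99 (0 : MvPolynomial (Fin 2) (ZMod 2)) (0 : MvPolynomial (Fin 2) (ZMod 2)) ?_).symm
      linear_combination (((-1 : MvPolynomial (Fin 2) (ZMod 2)) + (-1) * X 1 + (-1) * X 1 ^ 2)) * two_mvp_eq_zero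
    · refine ⟨(Ideal.Quotient.mk (BBIdeal 9 9)) ((1 : MvPolynomial (Fin 2) (ZMod 2)) + X 1 + X 1 ^ 3 + X 1 ^ 5 + X 1 ^ 6 + X 1 ^ 7 + X 0 ^ 3 * X 1 ^ 2 + X 0 ^ 3 * X 1 ^ 3 + X 0 ^ 3 * X 1 ^ 5 + X 0 ^ 3 * X 1 ^ 8 + X 0 ^ 6 * X 1 + X 0 ^ 6 * X 1 ^ 4 + X 0 ^ 6 * X 1 ^ 5 + X 0 ^ 6 * X 1 ^ 6), (Ideal.Quotient.mk (BBIdeal 9 9)) ((1 : MvPolynomial (Fin 2) (ZMod 2))), ?_⟩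
      rw [c9, d9, ← map_mul, ← map_mul, ← map_add]
      refine (mkeq99 (X 1 + X 1 ^ 4 + X 1 ^ 5 + X 1 ^ 6) ((1 : MvPolynomial (Fin 2) (ZMod 2)) + X 0 ^ 3 + X 0 ^ 3 * X 1) ?_).symm
      linear_combination (((1 : MvPolynomial (Fin 2) (ZMod 2)) + (-1) * X 1 ^ 2 + (-1) * X 1 ^ 3 + (-1) * X 1 ^ 7 + (-1) * X 1 ^ 8 + (-1) * X 1 ^ 9 + (-1) * X 0 ^ 3 * X 1 ^ 3 + (-1) * X 0 ^ 3 * X 1 ^ 4 + (-1) * X 0 ^ 3 * X 1 ^ 5 + (-1) * X 0 ^ 3 * X 1 ^ 6 + (-1) * X 0 ^ 3 * X 1 ^ 7 + (-1) * X 0 ^ 3 * X 1 ^ 9 + (-1) * X 0 ^ 3 * X 1 ^ 10 + (-1) * X 0 ^ 6 * X 1 ^ 2 + (-1) * X 0 ^ 6 * X 1 ^ 3 + (-1) * X 0 ^ 6 * X 1 ^ 5 + (-1) * X 0 ^ 6 * X 1 ^ 6 + (-1) * X 0 ^ 6 * X 1 ^ 7 + (-1) * X 0 ^ 6 * X 1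 ^ 8 + (-1) * X 0 ^ 9 * X 1 + (-1) * X 0 ^ 9 * X 1 ^ 4 + (-1) * X 0 ^ 9 * X 1 ^ 5 + (-1) * X 0 ^ 9 * X 1 ^ 6)) * two_mvp_eq_zero
    · refine ⟨(Ideal.Quotient.mk (BBIdeal 9 9)) ((1 : MvPolynomial (Fin 2) (ZMod 2)) + X 1 + X 1 ^ 2 + X 1 ^ 3 + X 1 ^ 5 + X 1 ^ 6 + X 1 ^ 7 + X 1 ^ 8 + X 0 ^ 3 * X 1 + X 0 ^ 3 * X 1 ^ 4 + X 0 ^ 3 * X 1 ^ 6 + X 0 ^ 3 * X 1 ^ 8 + X 0 ^ 6 + X 0 ^ 6 * X 1 + X 0 ^ 6 * X 1 ^ 2 + X 0 ^ 6 * X 1 ^ 5 + X 0 ^ 6 * X 1 ^ 6), (Ideal.Quotient.mk (BBIdeal 9 9)) (0 : MvPolynomial (Fin 2) (ZMod 2)), ?_⟩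
      rw [c9, d9, ← map_mul, ← map_mul, ← map_add]
      refine (mkeq99 ((1 : MvPolynomial (Fin 2) (ZMod 2)) + X 1 + X 1 ^ 2 + X 1 ^ 5 + X 1 ^ 6) (X 1 + X 0 ^ 3 + X 0 ^ 3 * X 1) ?_).symm
      linear_combination (((1 : MvPolynomial (Fin 2) (ZMod 2)) + X 1 + (-1) * X 1 ^ 3 + (-1) * X 1 ^ 4 + (-1) * X 1 ^ 7 + (-1) * X 1 ^ 8 + (-1) * X 1 ^ 9 + (-1) * X 1 ^ 10 + (-1) * X 0 ^ 3 * X 1 ^ 2 + (-1) * X 0 ^ 3 * X 1 ^ 3 + (-1) * X 0 ^ 3 * X 1 ^ 5 + (-1) * X 0 ^ 3 * X 1 ^ 6 + (-1) * X 0 ^ 3 * X 1 ^ 7 + (-1) * X 0 ^ 3 * X 1 ^ 8 + (-1) * X 0 ^ 3 * X 1 ^ 9 + (-1) * X 0 ^ 3 * X 1 ^ 10 + (-1) * X 0 ^ 6 * X 1 + (-1) * X 0 ^ 6 * X 1 ^ 2 + (-1) * X 0 ^ 6 * X 1 ^ 3 + (-1) * X 0 ^ 6 * X 1 ^ 4 +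 (-1) * X 0 ^ 6 * X 1 ^ 6 + (-1) * X 0 ^ 6 * X 1 ^ 7 + (-1) * X 0 ^ 6 * X 1 ^ 8 + (-1) * X 0 ^ 9 + (-1) * X 0 ^ 9 * X 1 + (-1) * X 0 ^ 9 * X 1 ^ 2 + (-1) * X 0 ^ 9 * X 1 ^ 5 + (-1) * X 0 ^ 9 * X 1 ^ 6)) * two_mvp_eq_zero
end
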